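/- arXiv:2402.16207 — 2 statements merged into one kernel-verified Lean document; each statement's English description precedes it below -/
import Mathlib

section
/- For each k ∈ [1,n], the number of order ideals J of the type C Gelfand–Tsetlin poset P satisfying |J ∩ A| = k (where A = {(i,i) : 1 ≤ i ≤ n}) equals C(2n,k) − C(2n,k−2). -/
open scoped Classical Pointwise

noncomputable section

/-- Position of `j` in the total order `1 ⋖ … ⋖ n ⋖ -n ⋖ … ⋖ -1` on `N`. -/
def ordKey (n : ℕ) (j : ℤ) : ℤ := if 0 < j then j else 2 * n + 1 + j

/-- Membership in the type C Gelfand–Tsetlin poset `P`: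
pairs `(i,j)` with `1 ≤ i ≤ n` and `i ≤ |j| ≤ n`. -/
def inP (n : ℕ) (p : ℤ × ℤ) : Prop :=
  1 ≤ p.1 ∧ p.1 ≤ (n : ℤ) ∧ p.1 ≤ |p.2| ∧ |p.2| ≤ (n : ℤ)

/-- The order relation `⪯` of `P`: `(i₁,j₁) ⪯ (i₂,j₂)` iff `i₁ ≤ i₂` and `j₁ ⩽̇ j₂`. -/
def ple (n : ℕ) (p q : ℤ × ℤ) : Prop :=
  p.1 ≤ q.1 ∧ ordKey n p.2 ≤ ordKey n q.2

/-- Strict version of `⪯`. -/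
def plt (n : ℕ) (p q : ℤ × ℤ) : Prop := ple n p q ∧ p ≠ q

/-- The elements of `N = {1,…,n,-n,…,-1}` listed in increasing `⋖` order. -/
def jList (n : ℕ) : List ℤ :=
  ((List.range n).map fun t => (t : ℤ) + 1) ++ ((List.range n).map fun t => (t : ℤ) - n)

/-- All pairs `(i,j)` with `i ∈ [1,n]`, `j ∈ N`, ordered first by `i` increasing,
then by `j` increasing with respect to `⋖`. -/
def posList (n : ℕ) : List (ℤ × ℤ) :=
  (List.range n).flatMap fun a => (jList n).map fun j => ((a : ℤ) + 1, j)

/-- `P` as a finite set. -/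
def Pfin (n : ℕ) : Finset (ℤ × ℤ) := (posList n).toFinset.filter (inP n)

/-- `N` as a finite set. -/
def Nfin (n : ℕ) : Finset ℤ := (jList n).toFinset

/-- The diagonal `A = {(i,i) : 1 ≤ i ≤ n}`. -/
def Aset (n : ℕ) : Finset (ℤ × ℤ) :=
  (Finset.range n).image fun t => (((t : ℤ) + 1, (t : ℤ) + 1) : ℤ × ℤ)

/-- Order ideals (downward closed subsets) of `P`. -/
def IsIdeal (n : ℕ) (J : Finset (ℤ × ℤ)) : Prop :=
  (∀ p ∈ J, inP n p) ∧ ∀ p ∈ J, ∀ q ∈ Pfin n, ple n q p → q ∈ J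

/-- The set of `≺`-maximal elements of `J`. -/
def maxPrec (n : ℕ) (J : Finset (ℤ × ℤ)) : Finset (ℤ × ℤ) :=
  J.filter fun p => ∀ q ∈ J, ple n p q → q = p

/-- `M_O(J) = (J ∩ O) ∪ max_≺(J)`. -/
def MO (n : ℕ) (O J : Finset (ℤ × ℤ)) : Finset (ℤ × ℤ) := (J ∩ O) ∪ maxPrec n J

/-- The permutation `w_M`: the product of the transpositions `s_{i,j}` over `(i,j) ∈ M`,
ordered first by `i` increasing and then by `j` increasing with respect to `⋖`
(the leftmost factor acts last). -/
def wPerm (n : ℕ) (M : Finset (ℤ × ℤ)) : Equiv.Perm ℤ :=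
  (((posList n).filter fun p => decide (p ∈ M)).map fun p => Equiv.swap p.1 p.2).prod

/-- `w^{O,J} = w_O⁻¹ ⬝ w_{M_O(J)}`. -/
def wOJ (n : ℕ) (O J : Finset (ℤ × ℤ)) : Equiv.Perm ℤ :=
  (wPerm n O)⁻¹ * wPerm n (MO n O J)

/-- The principal order ideal `⟨i,j⟩` of `(i,j) ∈ P`. -/
def princ (n : ℕ) (p : ℤ × ℤ) : Finset (ℤ × ℤ) := (Pfin n).filter fun q => ple n q p

/-- `r(i,j) = w^{O,⟨i,j⟩}(i)`. -/
def rMap (n : ℕ) (O : Finset (ℤ × ℤ)) (i j : ℤ) : ℤ := wOJ n O (princ n (i, j)) i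

/-- Inverse of `ordKey` (on the relevant range `[1, 2n]`). -/
def invOrdKey (n : ℕ) (t : ℤ) : ℤ := if t ≤ (n : ℤ) then t else t - (2 * n + 1)

/-- The `⋖`-maximal `j'` with `j' ⋖ j` and `(i,j') ∈ O`. -/
def prevO (n : ℕ) (O : Finset (ℤ × ℤ)) (i j : ℤ) : ℤ :=
  invOrdKey n (WithBot.unbotD 0 ((((Nfin n).filter fun j' => (i, j') ∈ O ∧ ordKey n j' < ordKey n j).image
    (ordKey n)).max))

/-- The pipe-dream linear transform `ξ` of `ℝ^P` (coordinates outside `P` are untouched):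
`ξ(ε_{i,i}) = ε_{i,r(i,i)}` and `ξ(ε_{i,j}) = ε_{i,r(i,j)} - ε_{i,r(i,j')}` for `j ≠ i`,
where `j'` is `⋖`-maximal with `j' ⋖ j` and `(i,j') ∈ O`. -/
def xiMap (n : ℕ) (O : Finset (ℤ × ℤ)) (x : (ℤ × ℤ) → ℝ) : (ℤ × ℤ) → ℝ := fun q =>
  if inP n q then
    (∑ j ∈ (Nfin n).filter (fun j => inP n (q.1, j) ∧ rMap n O q.1 j = q.2), x (q.1, j))
    - (∑ j ∈ (Nfin n).filter
        (fun j => inP n (q.1, j) ∧ j ≠ q.1 ∧ rMap n O q.1 (prevO n O q.1 j) = q.2), x (q.1, j))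
  else x q

/-- Indicator vector `1_{M_O(J)} ∈ ℝ^P`. -/
def indicMO (n : ℕ) (O J : Finset (ℤ × ℤ)) : (ℤ × ℤ) → ℝ := fun p =>
  if p ∈ MO n O J then 1 else 0

/-- The fundamental marked chain-order polytope `𝒬_O(ω_k)`:
the convex hull of the vectors `1_{M_O(J)}`, `J ∈ 𝒥ₖ`. -/
def QOfund (n : ℕ) (O : Finset (ℤ × ℤ)) (k : ℕ) : Set ((ℤ × ℤ) → ℝ) :=
  convexHull ℝ {x | ∃ J : Finset (ℤ × ℤ),
    IsIdeal n J ∧ (J ∩ Aset n).card = k ∧ x = indicMO n O J}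

/-- The marked chain-order polytope `𝒬_O(λ)` for `λ = a₁ω₁ + … + a_nω_n`:
the Minkowski sum `a₁𝒬_O(ω₁) + … + a_n𝒬_O(ω_n)`. -/
def QO (n : ℕ) (O : Finset (ℤ × ℤ)) (a : ℕ → ℕ) : Set ((ℤ × ℤ) → ℝ) :=
  ∑ k ∈ Finset.Icc 1 n, a k • QOfund n O k

/-- Integrality (lattice point) predicate. -/
def IsLat (x : (ℤ × ℤ) → ℝ) : Prop := ∀ p, ∃ m : ℤ, x p = m

/-- Type B: `λ(i) = a_i + … + a_{n-1} + a_n/2`. -/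
def lamB (n : ℕ) (a : ℕ → ℕ) (i : ℤ) : ℝ :=
  (∑ t ∈ Finset.Icc i.toNat (n - 1), (a t : ℝ)) + (a n : ℝ) / 2

/-- The type B poset polytope `𝒬^B_O(λ)` (H-description with factor `1/2`
on the coordinates in `B = {(i,-i)}`). -/
def QB (n : ℕ) (O : Finset (ℤ × ℤ)) (lam : ℤ → ℝ) : Set ((ℤ × ℤ) → ℝ) :=
  {x | (∀ i : ℤ, 1 ≤ i → i ≤ (n : ℤ) → x (i, i) = lam i) ∧
    (∀ p, inP n p → 0 ≤ x p) ∧ (∀ p, ¬ inP n p → x p = 0) ∧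
    ∀ (pq rs : ℤ × ℤ) (c : List (ℤ × ℤ)), pq ∈ O → inP n rs →
      (∀ q ∈ c, inP n q ∧ q ∉ O) →
      List.Chain' (plt n) (pq :: (c ++ [rs])) →
      (c.map x).sum ≤ x pq - (if rs.2 = -rs.1 then (1 : ℝ) / 2 else 1) * x rs}

/-- The point `x^{J,D}`. -/
def xJD (n : ℕ) (O J : Finset (ℤ × ℤ)) (D : Finset ℤ) : (ℤ × ℤ) → ℝ := fun p =>
  if p ∈ MO n O J then (if p.2 = -p.1 ∧ p.1 ∉ D then 2 else 1) else 0

/-- The projection `π : ℝ^P → ℝ^{P∖A}` (realized by zeroing the `A`-coordinates). -/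
def piA (x : (ℤ × ℤ) → ℝ) : (ℤ × ℤ) → ℝ := fun p => if p.2 = p.1 then 0 else x p

/-- The transformed type B poset polytope `Π^B_O(λ) = πξ(𝒬^B_O(λ))`. -/
def PiB (n : ℕ) (O : Finset (ℤ × ℤ)) (a : ℕ → ℕ) : Set ((ℤ × ℤ) → ℝ) :=
  (fun x => piA (xiMap n O x)) '' QB n O (lamB n a)

/-- The point `y^D ∈ ℝ^{P∖A}`. -/
def yD (D : Finset ℤ) : (ℤ × ℤ) → ℝ := fun p => if p.2 = -p.1 ∧ p.1 ∈ D then 1 else 0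

/-!
An ideal `J` with `|J ∩ A| = k` contains the diagonal point `(t, t)` exactly for `1 ≤ t ≤ k`,
so its nonempty rows are the rows `1, …, k`, and each of them is a `⋖`-initial segment of the
corresponding row of `P`. Recording the `⋖`-position `c_i` of the last element of row `i`
identifies these ideals with the sequences `c_1 ≥ ⋯ ≥ c_k` with `k ≤ c_i ≤ 2n + 1 - i`.
Splitting such sequences according to whether the last entry equals its lower bound gives a
Pascal recursion, which the ballot numbers `C(N, l) - C(N, l - 2)` satisfy as well; at the
boundary both vanish, by the symmetry `C(2l, l + 1) = C(2l, l - 1)`.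
-/

open Finset

def ballotNum (N l : ℕ) : ℤ :=
  (N.choose l : ℤ) - if 2 ≤ l then (N.choose (l - 2) : ℤ) else 0

lemma ballotNum_zero_right (N : ℕ) : ballotNum N 0 = 1 := by simp [ballotNum]

lemma ballotNum_succ_succ (N l : ℕ) :
    ballotNum (N + 1) (l + 1) = ballotNum N l + ballotNum N (l + 1) := by
  rcases l with _ | _ | l
  · simp [ballotNum, add_comm]
  · simp [ballotNum, Nat.choose_succ_succ, add_sub_assoc]
  · simp only [ballotNum, Nat.choose_succ_succ, le_add_iff_nonneg_left, zero_le, ↓reduceIte,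
      Nat.reduceSubDiff]
    push_cast
    ring

lemma ballotNum_two_mul_succ (l : ℕ) : ballotNum (2 * l) (l + 1) = 0 := by
  rcases l with _ | l
  · simp [ballotNum]
  · rw [ballotNum, if_pos (by omega), show 2 * (l + 1) = l + 1 + 1 + l by ring,
      Nat.choose_symm_add]
    simp

theorem Fin.antitone_snoc_iff {α : Type*} [Preorder α] {l : ℕ} {c : Fin l → α} {x : α} :
    Antitone (Fin.snoc c x : Fin (l + 1) → α) ↔ Antitone c ∧ ∀ i, x ≤ c i := by
  refine ⟨fun h => ⟨fun a b hab => ?_, fun i => ?_⟩, fun ⟨hc, hx⟩ a b hab => ?_⟩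
  · simpa using h (Fin.castSucc_le_castSucc_iff.mpr hab)
  · simpa using h (Fin.castSucc_lt_last i).le
  · induction b using Fin.lastCases with
    | last =>
      induction a using Fin.lastCases with
      | last => rfl
      | cast a => simpa using hx a
    | cast b =>
      induction a using Fin.lastCases with
      | last => exact absurd hab (by simp)
      | cast a => simpa using hc (Fin.castSucc_le_castSucc_iff.mp hab)

def ballotSeqs (m : ℤ) (l : ℕ) (j : ℤ) : Finset (Fin l → ℤ) :=
  (Fintype.piFinset fun i : Fin l => Icc j (m - i)).filter Antitone

section Ballot

variable {m j : ℤ} {l : ℕ}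

lemma mem_ballotSeqs {c : Fin l → ℤ} :
    c ∈ ballotSeqs m l j ↔ Antitone c ∧ ∀ i, j ≤ c i ∧ c i ≤ m - i := by
  simp [ballotSeqs, and_comm]

lemma card_ballotSeqs_zero : #(ballotSeqs m 0 j) = 1 :=
  card_eq_one.mpr ⟨finZeroElim, eq_singleton_iff_unique_mem.mpr
    ⟨mem_ballotSeqs.mpr ⟨Subsingleton.antitone _, finZeroElim⟩,
      fun _ _ => Subsingleton.elim _ _⟩⟩

lemma ballotSeqs_succ_eq_empty (h : m - l < j) : ballotSeqs m (l + 1) j = ∅ := by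
  refine eq_empty_of_forall_notMem fun c hc => ?_
  have := (mem_ballotSeqs.mp hc).2 (Fin.last l)
  rw [Fin.val_last] at this
  omega

lemma card_ballotSeqs_succ (h : j ≤ m - l) :
    #(ballotSeqs m (l + 1) j) = #(ballotSeqs m (l + 1) (j + 1)) + #(ballotSeqs m l j) := by
  rw [← card_filter_add_card_filter_not (fun c => c (Fin.last l) ≠ j)]
  congr 1
  · congr 1
    ext c
    simp only [mem_filter, mem_ballotSeqs]
    constructor
    · rintro ⟨⟨hanti, hb⟩, hne⟩
      refine ⟨hanti, fun i => ⟨?_, (hb i).2⟩⟩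
      have := hanti (Fin.le_last i)
      have := (hb (Fin.last l)).1
      omega
    · rintro ⟨hanti, hb⟩
      refine ⟨⟨hanti, fun i => ⟨by linarith [(hb i).1], (hb i).2⟩⟩, ?_⟩
      have := (hb (Fin.last l)).1
      omega
  · refine card_nbij' Fin.init (Fin.snoc · j) (fun c hc => ?_) (fun c hc => ?_)
      (fun c hc => ?_) (fun c _ => Fin.init_snoc _ _)
    · obtain ⟨hc, hlast⟩ := mem_filter.mp hc
      have hsnoc : c = Fin.snoc (Fin.init c) j := by rw [← not_not.mp hlast, Fin.snoc_init_self]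
      obtain ⟨hanti, hb⟩ := mem_ballotSeqs.mp hc
      rw [hsnoc, Fin.antitone_snoc_iff] at hanti
      exact mem_ballotSeqs.mpr ⟨hanti.1, fun i => ⟨hanti.2 i, (hb i.castSucc).2⟩⟩
    · obtain ⟨hanti, hb⟩ := mem_ballotSeqs.mp (mem_coe.mp hc)
      refine mem_filter.mpr ⟨mem_ballotSeqs.mpr
        ⟨Fin.antitone_snoc_iff.mpr ⟨hanti, fun i => (hb i).1⟩, fun i => ?_⟩, by simp⟩
      induction i using Fin.lastCases with
      | last => simpa using h
      | cast i => simpa using hb i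
    · have hlast := not_not.mp (mem_filter.mp hc).2
      exact hlast ▸ Fin.snoc_init_self c

end Ballot

theorem card_ballotSeqs (N l : ℕ) (m j : ℤ) (hN : m - j + l = N) (hl : l ≤ m - j + 2) :
    (#(ballotSeqs m l j) : ℤ) = ballotNum N l := by
  match l with
  | 0 => simp [card_ballotSeqs_zero, ballotNum_zero_right]
  | l + 1 =>
    obtain hj | hj := le_or_gt j (m - l)
    · obtain ⟨N, rfl⟩ : ∃ N', N = N' + 1 := ⟨N - 1, by omega⟩
      rw [card_ballotSeqs_succ hj, Nat.cast_add,
        card_ballotSeqs N (l + 1) m (j + 1) (by omega) (by omega),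
        card_ballotSeqs N l m j (by omega) (by omega), ballotNum_succ_succ, add_comm]
    · rw [ballotSeqs_succ_eq_empty hj, show N = 2 * l by omega, ballotNum_two_mul_succ]
      rfl
termination_by N

section Poset

variable {n : ℕ}

lemma ordKey_of_pos {j : ℤ} (h : 0 < j) : ordKey n j = j := if_pos h

lemma inP_iff_ordKey {i j : ℤ} :
    inP n (i, j) ↔
      1 ≤ i ∧ i ≤ n ∧ |j| ≤ n ∧ i ≤ ordKey n j ∧ ordKey n j ≤ 2 * n + 1 - i := by
  unfold inP ordKey
  split_ifs with h
  · rw [abs_of_pos h]; omega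
  · rw [abs_of_nonpos (not_lt.mp h)]; omega

lemma exists_inP_ordKey_eq {i t : ℤ} (hi : 1 ≤ i) (hin : i ≤ n) (hit : i ≤ t)
    (ht : t ≤ 2 * n + 1 - i) : ∃ j, inP n (i, j) ∧ ordKey n j = t := by
  by_cases htn : t ≤ n
  · have hj : ordKey n t = t := ordKey_of_pos (by omega)
    refine ⟨t, inP_iff_ordKey.mpr ⟨hi, hin, ?_, by omega⟩, hj⟩
    rw [abs_of_pos (by omega)]; exact htn
  · have hj : ordKey n (t - (2 * n + 1)) = t := by
      rw [ordKey, if_neg (by omega)]; ring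
    refine ⟨t - (2 * n + 1), inP_iff_ordKey.mpr ⟨hi, hin, ?_, by omega⟩, hj⟩
    rw [abs_of_neg (by omega)]; omega

lemma mem_Pfin {p : ℤ × ℤ} : p ∈ Pfin n ↔ inP n p := by
  simp only [Pfin, mem_filter, List.mem_toFinset, and_iff_right_iff_imp]
  obtain ⟨i, j⟩ := p
  rintro ⟨h1, h2, h3, h4⟩
  dsimp only at h1 h2 h3 h4
  simp only [posList, jList, List.pure_def, List.bind_eq_flatMap, List.mem_flatMap, List.mem_range,
    List.mem_singleton, List.mem_append, List.mem_map, Prod.mk.injEq]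
  refine ⟨i - 1, ⟨(i - 1).toNat, by omega, by omega⟩, j, ?_, by ring, rfl⟩
  rcases lt_or_ge 0 j with hj | hj
  · rw [abs_of_pos hj] at h3 h4
    exact .inl ⟨j - 1, ⟨(j - 1).toNat, by omega, by omega⟩, by ring⟩
  · rw [abs_of_nonpos hj] at h3 h4
    exact .inr ⟨j + n, ⟨(j + n).toNat, by omega, by omega⟩, by ring⟩

lemma mem_Aset {p : ℤ × ℤ} :
    p ∈ Aset n ↔ ∃ s : ℤ, 1 ≤ s ∧ s ≤ n ∧ (s, s) = p := by
  simp only [Aset, pure_def, bind_def, sup_singleton_apply, mem_image, mem_range,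
    exists_exists_and_eq_and]
  constructor
  · rintro ⟨a, ha, rfl⟩
    exact ⟨a + 1, by omega, by omega, rfl⟩
  · rintro ⟨s, h1, h2, rfl⟩
    exact ⟨(s - 1).toNat, by omega, by simp only [Prod.mk.injEq]; omega⟩

end Poset

namespace IsIdeal

variable {n k : ℕ} {J : Finset (ℤ × ℤ)}

lemma mem_of_ple (hJ : IsIdeal n J) {p q : ℤ × ℤ} (hp : p ∈ J) (hq : inP n q)
    (hqp : ple n q p) : q ∈ J :=
  hJ.2 p hp q (mem_Pfin.mpr hq) hqp

lemma mem_of_fst_le (hJ : IsIdeal n J) {i i' j : ℤ} (h : (i, j) ∈ J) (hi' : 1 ≤ i')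
    (hi'i : i' ≤ i) : (i', j) ∈ J := by
  obtain ⟨-, hin, hij, hjn⟩ := hJ.1 _ h
  exact hJ.mem_of_ple h ⟨hi', by dsimp only at *; omega, by dsimp only at *; omega, hjn⟩
    ⟨hi'i, le_rfl⟩

lemma diag_mem (hJ : IsIdeal n J) {p : ℤ × ℤ} (hp : p ∈ J) : (p.1, p.1) ∈ J := by
  obtain ⟨hi1, hin, -, hkey, -⟩ := inP_iff_ordKey.mp (hJ.1 _ hp)
  have hdiag : ordKey n p.1 = p.1 := ordKey_of_pos (by omega)
  exact hJ.mem_of_ple hp (inP_iff_ordKey.mpr ⟨hi1, hin, by rw [abs_of_pos (by omega)]; omega,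
    by omega, by omega⟩) ⟨le_rfl, by dsimp only; rw [hdiag]; exact hkey⟩

lemma diag_mem_of_le (hJ : IsIdeal n J) {s t : ℤ} (ht : (t, t) ∈ J) (hs : 1 ≤ s)
    (hst : s ≤ t) : (s, s) ∈ J :=
  hJ.diag_mem (hJ.mem_of_fst_le ht hs hst)

lemma le_card_inter_Aset (hJ : IsIdeal n J) {t : ℤ} (ht : (t, t) ∈ J) :
    t ≤ #(J ∩ Aset n) := by
  have htn := (inP_iff_ordKey.mp (hJ.1 _ ht)).2.1
  have hsub : (Icc 1 t).image (fun s => (s, s)) ⊆ J ∩ Aset n := by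
    intro p hp
    obtain ⟨s, hs, rfl⟩ := mem_image.mp hp
    rw [mem_Icc] at hs
    exact mem_inter.mpr
      ⟨hJ.diag_mem_of_le ht hs.1 hs.2, mem_Aset.mpr ⟨s, hs.1, by omega, rfl⟩⟩
  have := card_le_card hsub
  rw [card_image_of_injective _ fun a b h => (Prod.ext_iff.mp h).1, Int.card_Icc] at this
  omega

lemma card_inter_Aset_lt (hJ : IsIdeal n J) {t : ℤ} (ht1 : 1 ≤ t) (ht : (t, t) ∉ J) :
    #(J ∩ Aset n) < t := by
  have hsub : J ∩ Aset n ⊆ (Ico 1 t).image (fun s => (s, s)) := by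
    intro p hp
    obtain ⟨hpJ, hpA⟩ := mem_inter.mp hp
    obtain ⟨s, hs1, hsn, rfl⟩ := mem_Aset.mp hpA
    refine mem_image.mpr ⟨s, mem_Ico.mpr ⟨hs1, ?_⟩, rfl⟩
    by_contra! hts
    exact ht (hJ.diag_mem_of_le hpJ ht1 hts)
  have := card_le_card hsub
  rw [card_image_of_injective _ fun a b h => (Prod.ext_iff.mp h).1, Int.card_Ico] at this
  omega

lemma card_inter_Aset_eq_iff (hJ : IsIdeal n J) :
    #(J ∩ Aset n) = k ↔ ∀ t : ℤ, (t, t) ∈ J ↔ 1 ≤ t ∧ t ≤ k := by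
  constructor
  · rintro rfl t
    refine ⟨fun ht => ⟨(hJ.1 _ ht).1, hJ.le_card_inter_Aset ht⟩, fun ⟨ht1, htk⟩ => ?_⟩
    by_contra ht
    have := hJ.card_inter_Aset_lt ht1 ht
    omega
  · intro hdiag
    have hlt := hJ.card_inter_Aset_lt (t := k + 1) (by omega) fun h => by
      have := (hdiag _).mp h; omega
    rcases k.eq_zero_or_pos with rfl | hk
    · omega
    · have := hJ.le_card_inter_Aset ((hdiag k).mpr ⟨by omega, le_rfl⟩)
      omega

end IsIdeal

def idealOfSeq (n k : ℕ) (c : Fin k → ℤ) : Finset (ℤ × ℤ) :=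
  (Pfin n).filter fun p => ∃ i : Fin k, p.1 = i + 1 ∧ ordKey n p.2 ≤ c i

section IdealOfSeq

variable {n k : ℕ} {c c' : Fin k → ℤ}

lemma mem_idealOfSeq {p : ℤ × ℤ} :
    p ∈ idealOfSeq n k c ↔ inP n p ∧ ∃ i : Fin k, p.1 = i + 1 ∧ ordKey n p.2 ≤ c i := by
  rw [idealOfSeq, mem_filter, mem_Pfin]

lemma isIdeal_idealOfSeq (hc : Antitone c) : IsIdeal n (idealOfSeq n k c) := by
  refine ⟨fun p hp => (mem_idealOfSeq.mp hp).1, fun p hp q hq hqp => ?_⟩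
  obtain ⟨-, i, hpi, hpc⟩ := mem_idealOfSeq.mp hp
  have hqP := mem_Pfin.mp hq
  have hq1 := hqP.1
  have hqi : q.1 ≤ i + 1 := hpi ▸ hqp.1
  refine mem_idealOfSeq.mpr ⟨hqP, ⟨(q.1 - 1).toNat, by omega⟩, by dsimp only; omega, ?_⟩
  calc ordKey n q.2 ≤ ordKey n p.2 := hqp.2
    _ ≤ c i := hpc
    _ ≤ _ := hc (Fin.le_def.mpr (by dsimp only; omega))

lemma diag_mem_idealOfSeq (hkn : k ≤ n) (hc : ∀ i, k ≤ c i) (t : ℤ) :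
    (t, t) ∈ idealOfSeq n k c ↔ 1 ≤ t ∧ t ≤ k := by
  rw [mem_idealOfSeq]
  constructor
  · rintro ⟨⟨ht1, -⟩, i, hti, -⟩
    exact ⟨ht1, by simp only at hti; omega⟩
  · rintro ⟨ht1, htk⟩
    have htt : ordKey n t = t := ordKey_of_pos (by omega)
    refine ⟨inP_iff_ordKey.mpr
        ⟨ht1, by omega, by rw [abs_of_pos (by omega)]; omega, by omega, by omega⟩,
      ⟨(t - 1).toNat, by omega⟩, by dsimp only; omega, ?_⟩
    have := hc ⟨(t - 1).toNat, by omega⟩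
    simp only [htt]
    omega

lemma le_of_idealOfSeq_subset (hc : c ∈ ballotSeqs (2 * n) k k) (hkn : k ≤ n)
    (h : idealOfSeq n k c ⊆ idealOfSeq n k c') : c ≤ c' := by
  intro i
  have hb := (mem_ballotSeqs.mp hc).2 i
  have hik := i.isLt
  obtain ⟨j, hj, hjc⟩ := exists_inP_ordKey_eq (n := n) (i := i + 1) (t := c i)
    (by omega) (by omega) (by omega) (by omega)
  obtain ⟨-, i', hi', hc'⟩ :=
    mem_idealOfSeq.mp (h (mem_idealOfSeq.mpr ⟨hj, i, rfl, hjc.le⟩))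
  obtain rfl : i' = i := Fin.ext (by simp only at hi'; omega)
  exact hjc ▸ hc'

lemma exists_max_ordKey_of_mem {J : Finset (ℤ × ℤ)} {i j : ℤ} (h : (i, j) ∈ J) :
    ∃ p ∈ J, p.1 = i ∧ ∀ q ∈ J, q.1 = i → ordKey n q.2 ≤ ordKey n p.2 := by
  obtain ⟨p, hp, hmax⟩ := exists_max_image (J.filter fun q => q.1 = i) (fun q => ordKey n q.2)
    ⟨(i, j), mem_filter.mpr ⟨h, rfl⟩⟩
  exact ⟨p, (mem_filter.mp hp).1, (mem_filter.mp hp).2,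
    fun q hq hq1 => hmax q (mem_filter.mpr ⟨hq, hq1⟩)⟩

lemma exists_idealOfSeq_eq {J : Finset (ℤ × ℤ)} (hJ : IsIdeal n J)
    (hdiag : ∀ t : ℤ, (t, t) ∈ J ↔ 1 ≤ t ∧ t ≤ k) :
    ∃ c ∈ ballotSeqs (2 * n) k k, idealOfSeq n k c = J := by
  choose p hpJ hp1 hpmax using fun i : Fin k =>
    exists_max_ordKey_of_mem (n := n) ((hdiag ((i : ℤ) + 1)).mpr ⟨by omega, by omega⟩)
  refine ⟨fun i => ordKey n (p i).2,
    mem_ballotSeqs.mpr ⟨fun i i' hii' => ?_, fun i => ⟨?_, ?_⟩⟩, ?_⟩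
  · have hii' : (i : ℤ) ≤ i' := by exact_mod_cast hii'
    exact hpmax i ((i : ℤ) + 1, (p i').2)
      (hJ.mem_of_fst_le (hpJ i') (by omega) (by rw [hp1]; omega)) rfl
  · have hi := i.isLt
    have hkk := (hdiag k).mpr ⟨by omega, le_rfl⟩
    have hkey : ordKey n (k : ℤ) = k := ordKey_of_pos (by omega)
    simpa [hkey] using
      hpmax i ((i : ℤ) + 1, (k : ℤ)) (hJ.mem_of_fst_le hkk (by omega) (by omega)) rfl
  · have := (inP_iff_ordKey.mp (hJ.1 _ (hpJ i))).2.2.2.2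
    rw [hp1] at this
    omega
  · ext q
    rw [mem_idealOfSeq]
    refine ⟨fun ⟨hq, i, hqi, hqc⟩ => hJ.mem_of_ple (hpJ i) hq ⟨by rw [hp1]; omega, hqc⟩,
      fun hq => ?_⟩
    have hq1 := ((hdiag _).mp (hJ.diag_mem hq))
    exact ⟨hJ.1 _ hq, ⟨(q.1 - 1).toNat, by omega⟩, by dsimp only; omega,
      hpmax _ q hq (by dsimp only; omega)⟩

end IdealOfSeq

theorem stmt1_general (n k : ℕ) (hkn : k ≤ n) :
    (((((Pfin n).powerset).filter fun J => IsIdeal n J ∧ (J ∩ Aset n).card = k).card : ℤ))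
      = ((2 * n).choose k : ℤ) - (if 2 ≤ k then ((2 * n).choose (k - 2) : ℤ) else 0) := by
  have hset : ((Pfin n).powerset.filter fun J => IsIdeal n J ∧ #(J ∩ Aset n) = k) =
      (ballotSeqs (2 * n) k k).image (idealOfSeq n k) := by
    ext J
    simp only [mem_filter, mem_powerset, mem_image]
    constructor
    · rintro ⟨-, hJ, hcard⟩
      exact exists_idealOfSeq_eq hJ (hJ.card_inter_Aset_eq_iff.mp hcard)
    · rintro ⟨c, hc, rfl⟩
      have hJ := isIdeal_idealOfSeq (n := n) (mem_ballotSeqs.mp hc).1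
      exact ⟨filter_subset _ _, hJ, hJ.card_inter_Aset_eq_iff.mpr
        (diag_mem_idealOfSeq hkn fun i => ((mem_ballotSeqs.mp hc).2 i).1)⟩
  have hinj : Set.InjOn (idealOfSeq n k) (ballotSeqs (2 * n) k k) := fun c hc c' hc' h =>
    le_antisymm (le_of_idealOfSeq_subset hc hkn h.le) (le_of_idealOfSeq_subset hc' hkn h.ge)
  rw [hset, card_image_of_injOn hinj, card_ballotSeqs (2 * n) k _ _ (by push_cast; ring) (by omega)]
  rfl

/-- For `k ∈ [1,n]`, the number of order ideals `J` of `P` with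
`|J ∩ A| = k` equals `C(2n,k) − C(2n,k−2)`. -/
theorem stmt1 (n k : ℕ) (hn : 1 ≤ n) (hk1 : 1 ≤ k) (hkn : k ≤ n) :
    (((((Pfin n).powerset).filter fun J => IsIdeal n J ∧ (J ∩ Aset n).card = k).card : ℤ))
      = ((2 * n).choose k : ℤ) - (if 2 ≤ k then ((2 * n).choose (k - 2) : ℤ) else 0) :=
  stmt1_general n k hkn

end
end

section
/- Fix a total group order < on ℤ^{P∖A} and integral dominant weights λ, μ of a semisimple Lie algebra 𝔤. If d is an essential signature for < and λ, and d' is essential for < and μ, then d + d' is essential for < and λ + μ. -/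
/-!
Each `f_i` acts on `V ⊗ W` as a derivation, so
`f^e (v ⊗ w) = ∑_{a ≤ e} (∏ᵢ C(eᵢ, aᵢ)) • f^a v ⊗ f^{e-a} w`.
Push this into `(V ⧸ S) ⊗ (W ⧸ S')`, where `S` and `S'` are spanned by the monomials below `d`
and `d'`. In a translation-invariant total order, `a + b ≤ d + d'` forces `a < d` or `b < d'`
unless `(a, b) = (d, d')`. Hence every `f^e (v ⊗ w)` with `e < d + d'` maps to zero, while
`f^{d+d'} (v ⊗ w)` maps to a positive multiple of `[f^d v] ⊗ [f^{d'} w] ≠ 0`.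
-/
open scoped TensorProduct

noncomputable section

/-- Iterated Lie-module action `x^k · v`. -/
def lieIter {L V : Type*} [LieRing L] [AddCommGroup V] [LieRingModule L V]
    (x : L) (k : ℕ) (v : V) : V :=
  (fun w => ⁅x, w⁆)^[k] v

/-- Action of the ordered PBW monomial `f^d = ∏ f_i^{d_i}` (factors ordered by increasing
index, the leftmost factor acting last). -/
def monAct {L V : Type*} [LieRing L] [AddCommGroup V] [LieRingModule L V]
    {m : ℕ} (f : Fin m → L) (d : Fin m → ℕ) (v : V) : V :=
  (List.finRange m).foldr (fun i w => lieIter (f i) (d i) w) v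

/-- `d` is an essential signature for the vector `v` (and the total additive order `r`):
`f^d v` does not lie in the span of the `f^c v`, `c < d`. -/
def Essential {L V : Type*} [LieRing L] [LieAlgebra ℂ L] [AddCommGroup V] [Module ℂ V]
    [LieRingModule L V] [LieModule ℂ L V] {m : ℕ} (f : Fin m → L)
    (r : (Fin m → ℤ) → (Fin m → ℤ) → Prop) (v : V) (d : Fin m → ℕ) : Prop :=
  monAct f d v ∉ Submodule.span ℂ
    {w : V | ∃ c : Fin m → ℕ,
      r (fun i => (c i : ℤ)) (fun i => (d i : ℤ)) ∧ w = monAct f c v}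

theorem TensorProduct.tmul_ne_zero {K V W : Type*} [Field K] [AddCommGroup V] [Module K V]
    [AddCommGroup W] [Module K W] {x : V} {y : W} (hx : x ≠ 0) (hy : y ≠ 0) :
    x ⊗ₜ[K] y ≠ 0 := by
  obtain ⟨φ, hφ⟩ : ∃ φ : Module.Dual K V, φ x ≠ 0 := by
    by_contra! h
    exact hx ((Module.forall_dual_apply_eq_zero_iff K x).mp h)
  intro h
  have := congrArg (TensorProduct.lid K W ∘ φ.rTensor W) h
  simp only [Function.comp_apply, LinearMap.rTensor_tmul, TensorProduct.lid_tmul, map_zero]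
    at this
  exact hy ((smul_eq_zero.mp this).resolve_left hφ)

theorem Finset.sum_Iic_fin_succ {α M : Type*} [PartialOrder α] [LocallyFiniteOrderBot α]
    [DecidableEq α] [AddCommMonoid M] {n : ℕ}
    (e : Fin (n + 1) → α) (g : (Fin (n + 1) → α) → M) :
    ∑ a ∈ Iic e, g a = ∑ j ∈ Iic (e 0), ∑ a ∈ Iic (Fin.tail e), g (Fin.cons j a) := by
  rw [← Finset.sum_product']
  refine Finset.sum_nbij' (fun a => (a 0, Fin.tail a)) (fun p => Fin.cons p.1 p.2) ?_ ?_ ?_ ?_ ?_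
  · intro a ha
    simp only [mem_Iic, mem_product] at ha ⊢
    exact ⟨ha 0, fun i => ha i.succ⟩
  · rintro ⟨j, a⟩ h
    simp only [mem_Iic, mem_product] at h ⊢
    exact Fin.cons_le.mpr h
  · intro a _; simp
  · rintro ⟨j, a⟩ _; simp
  · intro a _; simp

section Expansion

variable {R L V W : Type*} [CommRing R] [LieRing L] [LieAlgebra R L]
  [AddCommGroup V] [Module R V] [LieRingModule L V] [LieModule R L V]
  [AddCommGroup W] [Module R W] [LieRingModule L W] [LieModule R L W]

variable (R) in
theorem lieIter_eq_pow_apply (x : L) (k : ℕ) (v : V) :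
    lieIter x k v = (LieModule.toEnd R L V x ^ k) v := by
  rw [Module.End.pow_apply]; rfl

theorem lieIter_tmul (x : L) (k : ℕ) (v : V) (w : W) :
    lieIter x k (v ⊗ₜ[R] w) =
      ∑ j ∈ Finset.Iic k, k.choose j • (lieIter x j v ⊗ₜ[R] lieIter x (k - j) w) := by
  set A := (LieModule.toEnd R L V x).rTensor W
  set B := (LieModule.toEnd R L W x).lTensor V
  have hAB : LieModule.toEnd R L (V ⊗[R] W) x = A + B := rfl
  have hcomm : Commute A B := by
    simp only [Commute, SemiconjBy, Module.End.mul_eq_comp, A, B,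
      LinearMap.rTensor_comp_lTensor, LinearMap.lTensor_comp_rTensor]
  rw [lieIter_eq_pow_apply R, hAB, hcomm.add_pow, ← Nat.range_succ_eq_Iic, LinearMap.sum_apply]
  refine Finset.sum_congr rfl fun j _ => ?_
  rw [Module.End.mul_apply, Module.End.mul_apply, Module.End.natCast_apply, map_nsmul, map_nsmul,
    LinearMap.lTensor_pow, LinearMap.lTensor_tmul, LinearMap.rTensor_pow,
    LinearMap.rTensor_tmul, lieIter_eq_pow_apply R, lieIter_eq_pow_apply R]

theorem monAct_succ {m : ℕ} (f : Fin (m + 1) → L) (e : Fin (m + 1) → ℕ) (v : V) :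
    monAct f e v = lieIter (f 0) (e 0) (monAct (Fin.tail f) (Fin.tail e) v) := by
  simp [monAct, List.finRange_succ, List.foldr_map, Fin.tail]

theorem monAct_tmul {m : ℕ} (f : Fin m → L) (e : Fin m → ℕ) (v : V) (w : W) :
    monAct f e (v ⊗ₜ[R] w) =
      ∑ a ∈ Finset.Iic e,
        (∏ i, (e i).choose (a i)) • (monAct f a v ⊗ₜ[R] monAct f (e - a) w) := by
  induction m with
  | zero => simp [monAct, Pi.card_Iic]
  | succ m ih =>
    rw [monAct_succ, ih, lieIter_eq_pow_apply R, map_sum, Finset.sum_Iic_fin_succ,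
      Finset.sum_comm]
    refine Finset.sum_congr rfl fun a _ => ?_
    rw [map_nsmul, ← lieIter_eq_pow_apply R, lieIter_tmul, Finset.smul_sum]
    refine Finset.sum_congr rfl fun j _ => ?_
    rw [smul_smul, monAct_succ f _ v, monAct_succ f _ w]
    simp only [Fin.prod_univ_succ, Fin.cons_zero, Fin.cons_succ, Fin.tail_cons, Pi.sub_apply,
      mul_comm]
    rfl

end Expansion

theorem eq_and_eq_or_lt_add_of_not_lt {G : Type*} [AddCommMagma G] {r : G → G → Prop}
    (hr : IsStrictTotalOrder G r) (hradd : ∀ a b c : G, r a b → r (a + c) (b + c))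
    {a b c d : G} (hac : ¬ r a c) (hbd : ¬ r b d) : (a = c ∧ b = d) ∨ r (c + d) (a + b) := by
  have hca : c = a ∨ r c a := (trichotomous_of r a c).resolve_left hac |>.imp Eq.symm id
  have hdb : d = b ∨ r d b := (trichotomous_of r b d).resolve_left hbd |>.imp Eq.symm id
  rcases hca with rfl | hca <;> rcases hdb with rfl | hdb
  · exact Or.inl ⟨rfl, rfl⟩
  · right; simpa only [add_comm] using hradd _ _ c hdb
  · exact Or.inr (hradd _ _ d hca)
  · have hdb' : r (a + d) (a + b) := by simpa only [add_comm] using hradd _ _ a hdb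
    exact Or.inr (_root_.trans (hradd _ _ d hca) hdb')

theorem natCast_pi_add {m : ℕ} (a b : Fin m → ℕ) :
    (fun i => ((a + b) i : ℤ)) = (fun i => (a i : ℤ)) + fun i => (b i : ℤ) := by
  funext i; simp

theorem natCast_pi_injective {m : ℕ} {a b : Fin m → ℕ}
    (h : (fun i => (a i : ℤ)) = fun i => (b i : ℤ)) : a = b :=
  funext fun i => by exact_mod_cast congrFun h i

theorem eq_and_eq_add_or_lt_of_not_lt {m : ℕ} {r : (Fin m → ℤ) → (Fin m → ℤ) → Prop}
    {a e d d' : Fin m → ℕ}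
    (hr : IsStrictTotalOrder (Fin m → ℤ) r)
    (hradd : ∀ a b c : Fin m → ℤ, r a b → r (a + c) (b + c)) (hae : a ≤ e)
    (had : ¬ r (fun i => (a i : ℤ)) (fun i => (d i : ℤ)))
    (hbd : ¬ r (fun i => ((e - a) i : ℤ)) (fun i => (d' i : ℤ))) :
    (a = d ∧ e = d + d') ∨ r (fun i => ((d + d') i : ℤ)) (fun i => (e i : ℤ)) := by
  have he : e = a + (e - a) := (add_tsub_cancel_of_le hae).symm
  rcases eq_and_eq_or_lt_add_of_not_lt hr hradd had hbd with ⟨ha, hb⟩ | hlt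
  · obtain rfl := natCast_pi_injective ha
    exact Or.inl ⟨rfl, by rw [he, natCast_pi_injective hb]⟩
  · rw [← natCast_pi_add, ← natCast_pi_add, ← he] at hlt
    exact Or.inr hlt

section PrecedingSpan

variable (K : Type*) {L V W : Type*} [Field K] [LieRing L]
  [AddCommGroup V] [Module K V] [LieRingModule L V]
  [AddCommGroup W] [Module K W] [LieRingModule L W]
  {m : ℕ} (f : Fin m → L) (r : (Fin m → ℤ) → (Fin m → ℤ) → Prop)

def precedingSpan (v : V) (d : Fin m → ℕ) : Submodule K V :=
  Submodule.span K {w : V | ∃ c : Fin m → ℕ,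
    r (fun i => (c i : ℤ)) (fun i => (d i : ℤ)) ∧ w = monAct f c v}

def precedingQuotientMap (v : V) (w : W) (d d' : Fin m → ℕ) :
    V ⊗[K] W →ₗ[K] (V ⧸ precedingSpan K f r v d) ⊗[K] (W ⧸ precedingSpan K f r w d') :=
  TensorProduct.map (precedingSpan K f r v d).mkQ (precedingSpan K f r w d').mkQ

variable {K f r} {v : V} {w : W} {d d' : Fin m → ℕ}

theorem mkQ_monAct_eq_zero {c : Fin m → ℕ}
    (h : r (fun i => (c i : ℤ)) (fun i => (d i : ℤ))) :
    (precedingSpan K f r v d).mkQ (monAct f c v) = 0 :=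
  (Submodule.Quotient.mk_eq_zero _).mpr (Submodule.subset_span ⟨c, h, rfl⟩)

theorem precedingQuotientMap_monAct_tmul_eq_zero (hr : IsStrictTotalOrder (Fin m → ℤ) r)
    (hradd : ∀ a b c : Fin m → ℤ, r a b → r (a + c) (b + c)) {a e : Fin m → ℕ}
    (hae : a ≤ e)
    (he : r (fun i => (e i : ℤ)) (fun i => ((d + d') i : ℤ)) ∨ (e = d + d' ∧ a ≠ d)) :
    precedingQuotientMap K f r v w d d' (monAct f a v ⊗ₜ monAct f (e - a) w) = 0 := by
  by_cases had : r (fun i => (a i : ℤ)) (fun i => (d i : ℤ))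
  · simp [precedingQuotientMap, mkQ_monAct_eq_zero had]
  by_cases hbd : r (fun i => ((e - a) i : ℤ)) (fun i => (d' i : ℤ))
  · simp [precedingQuotientMap, mkQ_monAct_eq_zero hbd]
  exfalso
  rcases eq_and_eq_add_or_lt_of_not_lt hr hradd hae had hbd with ⟨rfl, rfl⟩ | hlt
  · rcases he with he | ⟨-, hne⟩
    · exact irrefl _ he
    · exact hne rfl
  · rcases he with he | ⟨rfl, -⟩
    · exact asymm he hlt
    · exact irrefl _ hlt

variable [LieAlgebra K L] [LieModule K L V] [LieModule K L W]

theorem precedingQuotientMap_monAct_tmul (e : Fin m → ℕ) :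
    precedingQuotientMap K f r v w d d' (monAct f e (v ⊗ₜ[K] w)) =
      ∑ a ∈ Finset.Iic e, (∏ i, (e i).choose (a i)) •
        precedingQuotientMap K f r v w d d' (monAct f a v ⊗ₜ monAct f (e - a) w) := by
  simp only [monAct_tmul, map_sum, map_nsmul]

theorem precedingSpan_tmul_le_ker (hr : IsStrictTotalOrder (Fin m → ℤ) r)
    (hradd : ∀ a b c : Fin m → ℤ, r a b → r (a + c) (b + c)) :
    precedingSpan K f r (v ⊗ₜ[K] w) (d + d') ≤
      LinearMap.ker (precedingQuotientMap K f r v w d d') := by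
  rw [precedingSpan, Submodule.span_le]
  rintro _ ⟨e, he, rfl⟩
  rw [SetLike.mem_coe, LinearMap.mem_ker, precedingQuotientMap_monAct_tmul]
  refine Finset.sum_eq_zero fun a ha => ?_
  rw [precedingQuotientMap_monAct_tmul_eq_zero hr hradd (Finset.mem_Iic.mp ha) (Or.inl he),
    smul_zero]

theorem precedingQuotientMap_monAct_add_tmul (hr : IsStrictTotalOrder (Fin m → ℤ) r)
    (hradd : ∀ a b c : Fin m → ℤ, r a b → r (a + c) (b + c)) :
    precedingQuotientMap K f r v w d d' (monAct f (d + d') (v ⊗ₜ[K] w)) =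
      (∏ i, (d i + d' i).choose (d i)) •
        ((precedingSpan K f r v d).mkQ (monAct f d v) ⊗ₜ
          (precedingSpan K f r w d').mkQ (monAct f d' w)) := by
  rw [precedingQuotientMap_monAct_tmul,
    Finset.sum_eq_single_of_mem d (Finset.mem_Iic.mpr le_self_add)]
  · simp [precedingQuotientMap]
  · intro a ha had
    rw [precedingQuotientMap_monAct_tmul_eq_zero hr hradd (Finset.mem_Iic.mp ha)
      (Or.inr ⟨rfl, had⟩), smul_zero]

end PrecedingSpan

theorem stmt16_general {L : Type*} [LieRing L] [LieAlgebra ℂ L]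
    {V W : Type*} [AddCommGroup V] [Module ℂ V] [LieRingModule L V] [LieModule ℂ L V]
    [AddCommGroup W] [Module ℂ W] [LieRingModule L W] [LieModule ℂ L W]
    {m : ℕ} (f : Fin m → L)
    (r : (Fin m → ℤ) → (Fin m → ℤ) → Prop)
    (hr : IsStrictTotalOrder (Fin m → ℤ) r)
    (hradd : ∀ a b c : Fin m → ℤ, r a b → r (a + c) (b + c))
    (v : V) (w : W) (d d' : Fin m → ℕ)
    (hd : Essential f r v d) (hd' : Essential f r w d') :
    Essential f r (v ⊗ₜ[ℂ] w) (d + d') := by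
  intro hmem
  have hzero := LinearMap.mem_ker.mp (precedingSpan_tmul_le_ker hr hradd hmem)
  rw [precedingQuotientMap_monAct_add_tmul hr hradd] at hzero
  have hcoeff : (∏ i, (d i + d' i).choose (d i)) ≠ 0 :=
    Finset.prod_ne_zero_iff.mpr fun i _ => (Nat.choose_pos (Nat.le_add_right _ _)).ne'
  have hvd : (precedingSpan ℂ f r v d).mkQ (monAct f d v) ≠ 0 :=
    mt (Submodule.Quotient.mk_eq_zero _).mp hd
  have hwd : (precedingSpan ℂ f r w d').mkQ (monAct f d' w) ≠ 0 :=
    mt (Submodule.Quotient.mk_eq_zero _).mp hd'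
  rw [← Nat.cast_smul_eq_nsmul ℂ] at hzero
  exact smul_ne_zero (Nat.cast_ne_zero.mpr hcoeff) (TensorProduct.tmul_ne_zero hvd hwd) hzero

/-- For a total group order on `ℤ^{P∖A}`: if `d` is essential for `λ` and
`d'` is essential for `μ`, then `d + d'` is essential for `λ + μ` (essentiality for
`λ + μ` tested inside `V_{λ+μ} ⊆ V_λ ⊗ V_μ` with `v_{λ+μ} = v_λ ⊗ v_μ`). -/
theorem stmt16 {L : Type*} [LieRing L] [LieAlgebra ℂ L] [LieAlgebra.IsSemisimple ℂ L]
    {V W : Type*} [AddCommGroup V] [Module ℂ V] [LieRingModule L V] [LieModule ℂ L V]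
    [AddCommGroup W] [Module ℂ W] [LieRingModule L W] [LieModule ℂ L W]
    {m : ℕ} (f : Fin m → L)
    (r : (Fin m → ℤ) → (Fin m → ℤ) → Prop)
    (hr : IsStrictTotalOrder (Fin m → ℤ) r)
    (hradd : ∀ a b c : Fin m → ℤ, r a b → r (a + c) (b + c))
    (v : V) (w : W) (d d' : Fin m → ℕ)
    (hd : Essential f r v d) (hd' : Essential f r w d') :
    Essential f r (v ⊗ₜ[ℂ] w) (d + d') :=
  stmt16_general f r hr hradd v w d d' hd hd'

end
end
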